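/- arXiv:1011.3695 — 3 statements merged into one kernel-verified Lean document; each statement's English description precedes it below -/
import Mathlib

section
/- In an oriented angle-taut tetrahedron, the cyclic order of the three normal quadrilateral types induced by the orientation sends the quadrilateral q dual to the π-edges first to the quadrilateral τ(q) dual to the two blue (left-veering) edges and then to the quadrilateral τ²(q) dual to the two red (right-veering) edges; in particular the veering colouring of the 0-edges is determined by the choice of the π-quadrilateral together with the orientation. -/
/-!
STATEMENT 1: In an oriented veering (angle-taut) tetrahedron, the cyclic order τ on the
three normal quadrilateral types induced by the orientation sends the quadrilateral `q`
dual to the π-edge pair to the quadrilateral `τ q` dual to the two blue (left-veering)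
edges, and then to `τ² q`, dual to the two red (right-veering) edges.

Model: vertices `Fin 4`; the three quadrilateral types are the three perfect matchings of
K4, indexed by `Fin 3` via `pairOf i = {0, i+1}` (the matching is `{pairOf i, (pairOf i)ᶜ}`);
the orientation-induced 3-cycle is `τ = (0 1 2)` on `Fin 3`.  The veering structure is as
in Statement 0: at each vertex the three incident edges occur in the cyclic order
(π-edge, blue, red) given by `cyc`.
-/

/-- Cyclic order at each vertex of the positively oriented 3-simplex on `Fin 4`. -/
def cyc : Fin 4 → Fin 4 → Fin 4
  | 0, 1 => 2 | 0, 2 => 3 | 0, 3 => 1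
  | 1, 0 => 3 | 1, 3 => 2 | 1, 2 => 0
  | 2, 0 => 1 | 2, 1 => 3 | 2, 3 => 0
  | 3, 0 => 2 | 3, 2 => 1 | 3, 1 => 0
  | _, _ => 0

/-- The `i`-th perfect matching of K4 is `{pairOf i, (pairOf i)ᶜ}`. -/
def pairOf (i : Fin 3) : Finset (Fin 4) := {0, i.succ}

/-- The 3-cycle on normal quadrilateral types induced by the orientation. -/
def τ (i : Fin 3) : Fin 3 := i + 1

theorem veering_tau_sends_pi_to_blue_to_red
    (α : Finset (Fin 4) → ℝ) (c : Finset (Fin 4) → Bool)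
    (hvals : ∀ e : Finset (Fin 4), e.card = 2 → α e = 0 ∨ α e = Real.pi)
    (hpi : ∃ e₀ : Finset (Fin 4), e₀.card = 2 ∧
      ∀ e : Finset (Fin 4), e.card = 2 → (α e = Real.pi ↔ (e = e₀ ∨ e = e₀ᶜ)))
    (hveer : ∀ v w : Fin 4, v ≠ w → α {v, w} = Real.pi →
      c {v, cyc v w} = false ∧ c {v, cyc v (cyc v w)} = true) :
    -- if `q` is the quadrilateral type dual to the π-edges, then both edges dual to
    -- `τ q` are blue (left-veering) and both edges dual to `τ (τ q)` are red
    -- (right-veering); in particular the colouring is determined by `q` and the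
    -- orientation.
    ∀ q : Fin 3, α (pairOf q) = Real.pi →
      (c (pairOf (τ q)) = false ∧ c ((pairOf (τ q))ᶜ) = false) ∧
      (c (pairOf (τ (τ q))) = true ∧ c ((pairOf (τ (τ q)))ᶜ) = true) := by
  intro q hq
  have hq3 : q = 0 ∨ q = 1 ∨ q = 2 := by omega
  rcases hq3 with rfl | rfl | rfl
  · have h01 := hveer 0 1 (by decide) (by rwa [show pairOf 0 = ({0,1} : Finset (Fin 4)) from by decide] at hq)
    have h10 := hveer 1 0 (by decide) (by
      rw [show ({1,0} : Finset (Fin 4)) = pairOf 0 from by decide]; exact hq)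
    simp only [show cyc 0 1 = 2 from rfl, show cyc 0 2 = 3 from rfl,
      show cyc 1 0 = 3 from rfl, show cyc 1 3 = 2 from rfl] at h01 h10
    refine ⟨⟨?_, ?_⟩, ?_, ?_⟩
    · rw [show pairOf (τ 0) = ({0,2} : Finset (Fin 4)) from by decide]; exact h01.1
    · rw [show (pairOf (τ 0))ᶜ = ({1,3} : Finset (Fin 4)) from by decide]; exact h10.1
    · rw [show pairOf (τ (τ 0)) = ({0,3} : Finset (Fin 4)) from by decide]; exact h01.2
    · rw [show (pairOf (τ (τ 0)))ᶜ = ({1,2} : Finset (Fin 4)) from by decide]; exact h10.2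
  · have h02 := hveer 0 2 (by decide) (by rwa [show pairOf 1 = ({0,2} : Finset (Fin 4)) from by decide] at hq)
    have h20 := hveer 2 0 (by decide) (by
      rw [show ({2,0} : Finset (Fin 4)) = pairOf 1 from by decide]; exact hq)
    simp only [show cyc 0 2 = 3 from rfl, show cyc 0 3 = 1 from rfl,
      show cyc 2 0 = 1 from rfl, show cyc 2 1 = 3 from rfl] at h02 h20
    refine ⟨⟨?_, ?_⟩, ?_, ?_⟩
    · rw [show pairOf (τ 1) = ({0,3} : Finset (Fin 4)) from by decide]; exact h02.1
    · rw [show (pairOf (τ 1))ᶜ = ({2,1} : Finset (Fin 4)) from by decide]; exact h20.1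
    · rw [show pairOf (τ (τ 1)) = ({0,1} : Finset (Fin 4)) from by decide]; exact h02.2
    · rw [show (pairOf (τ (τ 1)))ᶜ = ({2,3} : Finset (Fin 4)) from by decide]; exact h20.2
  · have h03 := hveer 0 3 (by decide) (by rwa [show pairOf 2 = ({0,3} : Finset (Fin 4)) from by decide] at hq)
    have h30 := hveer 3 0 (by decide) (by
      rw [show ({3,0} : Finset (Fin 4)) = pairOf 2 from by decide]; exact hq)
    simp only [show cyc 0 3 = 1 from rfl, show cyc 0 1 = 2 from rfl,
      show cyc 3 0 = 2 from rfl, show cyc 3 2 = 1 from rfl] at h03 h30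
    refine ⟨⟨?_, ?_⟩, ?_, ?_⟩
    · rw [show pairOf (τ 2) = ({0,1} : Finset (Fin 4)) from by decide]; exact h03.1
    · rw [show (pairOf (τ 2))ᶜ = ({3,2} : Finset (Fin 4)) from by decide]; exact h30.1
    · rw [show pairOf (τ (τ 2)) = ({0,2} : Finset (Fin 4)) from by decide]; exact h03.2
    · rw [show (pairOf (τ (τ 2)))ᶜ = ({3,1} : Finset (Fin 4)) from by decide]; exact h30.2
end

section
/- In a veering triangulation, every edge of the triangulation has degree at least four. -/
/-!
STATEMENT 3: In a veering triangulation, every edge has degree at least four.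

Model of the link of an edge `e` of degree `k`, as in Statement 2: tetrahedra around `e`
indexed cyclically by `ZMod k`, angles in `{0, π}` with exactly two π's, colours `ce` of
`e` and `t i`, `b i` of the two edges adjacent to `e` in the face shared by tetrahedra
`i` and `i+1`, subject to the veering colour rules.  Since the two π-tetrahedra are
distinct and (by the veering condition) not cyclically adjacent, each side contributes
at least one 0-angle tetrahedron, so `k ≥ 2 + 2 = 4`.
-/

theorem veering_edge_degree_at_least_four
    (k : ℕ) [NeZero k] (ce : Bool)
    (angle : ZMod k → ℝ) (t b : ZMod k → Bool)
    (htaut : ∀ i, angle i = 0 ∨ angle i = Real.pi)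
    (i₀ i₁ : ZMod k) (hne : i₀ ≠ i₁)
    (h0 : angle i₀ = Real.pi) (h1 : angle i₁ = Real.pi)
    (honly : ∀ i, angle i = Real.pi → i = i₀ ∨ i = i₁)
    (hπrule : ∀ i, angle i = Real.pi →
      t i = false ∧ b (i - 1) = false ∧ t (i - 1) = true ∧ b i = true)
    (h0rule : ∀ i, angle i = 0 →
      (ce = true → b i = false ∧ t (i - 1) = false) ∧
      (ce = false → b (i - 1) = true ∧ t i = true)) :
    4 ≤ k := by
  -- No two adjacent π-tetrahedra:
  have hadj : ∀ j : ZMod k, angle j = Real.pi → angle (j + 1) ≠ Real.pi := by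
    intro j hj hj1
    have h1 := (hπrule j hj).1
    have h2 := (hπrule (j + 1) hj1).2.2.1
    rw [add_sub_cancel_right] at h2
    rw [h1] at h2
    exact Bool.false_ne_true h2
  by_contra hlt
  push_neg at hlt
  interval_cases k
  · exact absurd rfl (NeZero.ne 0)
  · exact hne (Subsingleton.elim i₀ i₁)
  · have h : i₁ = i₀ + 1 := by clear * - hne; revert hne; revert i₀ i₁; decide
    exact hadj i₀ h0 (h ▸ h1)
  · have h : i₁ = i₀ + 1 ∨ i₀ = i₁ + 1 := by clear * - hne; revert hne; revert i₀ i₁; decide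
    rcases h with h | h
    · exact hadj i₀ h0 (h ▸ h1)
    · exact hadj i₁ h1 (h ▸ h0)
end

section
/- Let S be an embedded normal surface in a veering triangulation all of whose quadrilateral discs are vertical-1 (all corners on red edges), with the two +1 corners of each quadrilateral inheriting angle π and the two −1 corners inheriting angle 0. Then at any vertex of the induced cell structure on S (i.e., at any edge e of the triangulation), at most four quadrilateral discs of S meet, because the angles of discs of S at e sum to at most the total angle 2π around e and each disc contributes 0 or π but embeddedness bounds the number of 0-contributions by the one-sided degrees. -/
lemma zmod1_absurd (i₀ i₁ : ZMod 1) (h : i₀ ≠ i₁) : False := h (Subsingleton.elim _ _)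

lemma zmod2_absurd (i₀ i₁ : ZMod 2) (h : i₀ ≠ i₁) (h2 : i₁ ≠ i₀ + 1) : False := by
  revert i₀ i₁; decide

open Classical in
theorem vertex_meets_two_or_four_quads
    (k : ℕ) [NeZero k]
    (α : ZMod k → ℝ) (s : ZMod k → ℕ)
    (i₀ i₁ : ZMod k) (hne : i₀ ≠ i₁)
    (hnadj : i₁ ≠ i₀ + 1 ∧ i₀ ≠ i₁ + 1)
    (hα : ∀ i, α i = Real.pi ↔ (i = i₀ ∨ i = i₁))
    (hvals : ∀ i, α i = 0 ∨ α i = Real.pi)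
    -- the vertex link of S traverses the edge link once
    (htraverse : ∀ i, s i ≤ 1)
    -- total angle of the discs at the vertex is 2π
    (hsum : ∑ i, (s i : ℝ) * α i = 2 * Real.pi)
    -- Property (*): an occupied 0-slot is the unique 0-slot on its side of e
    (hstar : ∀ i, α i = 0 → s i ≠ 0 → α (i - 1) = Real.pi ∧ α (i + 1) = Real.pi)
    -- the 0-angle corners of quadrilaterals of S at the vertex pair up
    (heven : Even (∑ i ∈ Finset.univ.filter (fun i => α i = 0), s i)) :
    (∑ i, s i = 2 ∨ ∑ i, s i = 4) ∧ (∑ i, s i = 4 → k = 4) := by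
  have hk1 : k ≠ 1 := by rintro rfl; exact zmod1_absurd i₀ i₁ hne
  have hk2 : k ≠ 2 := by rintro rfl; exact zmod2_absurd i₀ i₁ hne hnadj.1
  have hk0 : k ≠ 0 := NeZero.ne k
  have hkdvd2 : ¬ (k ∣ 2) := by
    intro h
    have := Nat.le_of_dvd (by norm_num) h
    rcases h with ⟨c, hc⟩
    omega
  -- zero slots other than i₀, i₁
  have hzero : ∀ i, i ≠ i₀ → i ≠ i₁ → α i = 0 := by
    intro i h0 h1
    rcases hvals i with h | h
    · exact h
    · rcases (hα i).mp h with rfl | rfl <;> simp_all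
  -- s i₀ + s i₁ = 2
  have hαi₀ : α i₀ = Real.pi := (hα i₀).mpr (Or.inl rfl)
  have hαi₁ : α i₁ = Real.pi := (hα i₁).mpr (Or.inr rfl)
  have hsum2 : s i₀ + s i₁ = 2 := by
    have h1 : ∑ i ∈ ({i₀, i₁} : Finset (ZMod k)), (s i : ℝ) * α i = 2 * Real.pi := by
      rw [Finset.sum_subset (Finset.subset_univ _)]
      · exact hsum
      · intro i _ hi
        simp only [Finset.mem_insert, Finset.mem_singleton, not_or] at hi
        rw [hzero i hi.1 hi.2, mul_zero]
    rw [Finset.sum_pair hne, hαi₀, hαi₁] at h1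
    have h2 : ((s i₀ + s i₁ : ℕ) : ℝ) * Real.pi = 2 * Real.pi := by push_cast; ring_nf; linarith [h1]
    have h3 := mul_right_cancel₀ Real.pi_ne_zero h2
    exact_mod_cast h3
  -- the non-zero-angle slots are exactly {i₀, i₁}
  have hfilt : Finset.univ.filter (fun i => ¬ α i = 0) = ({i₀, i₁} : Finset (ZMod k)) := by
    ext i
    simp only [Finset.mem_filter, Finset.mem_univ, true_and, Finset.mem_insert,
      Finset.mem_singleton]
    constructor
    · intro h
      rcases hvals i with h' | h'
      · exact absurd h' h
      · exact (hα i).mp h'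
    · rintro (rfl | rfl) <;> simp [hαi₀, hαi₁, Real.pi_ne_zero]
  set Z := ∑ i ∈ Finset.univ.filter (fun i => α i = 0), s i with hZ
  have htot : ∑ i, s i = Z + 2 := by
    rw [← Finset.sum_filter_add_sum_filter_not Finset.univ (fun i => α i = 0) s,
      hfilt, Finset.sum_pair hne, hsum2]
  -- occupied zero slots are among {i₀+1, i₁+1}
  have hkey : ∀ i, α i = 0 → i ≠ i₀ + 1 → i ≠ i₁ + 1 → s i = 0 := by
    intro i h0 h1 h2
    by_contra hs
    have := (hstar i h0 hs).1
    rcases (hα _).mp this with h | h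
    · exact h1 (by rw [← h]; ring)
    · exact h2 (by rw [← h]; ring)
  have hne' : i₀ + 1 ≠ i₁ + 1 := fun h => hne (by exact add_right_cancel h)
  have hZle : Z ≤ s (i₀ + 1) + s (i₁ + 1) := by
    have e1 : Z = ∑ i ∈ (Finset.univ.filter (fun i => α i = 0)) ∩ {i₀ + 1, i₁ + 1}, s i := by
      rw [hZ]
      apply (Finset.sum_subset Finset.inter_subset_left _).symm
      intro i hi hni
      simp only [Finset.mem_filter, Finset.mem_univ, true_and] at hi
      simp only [Finset.mem_inter, Finset.mem_filter, Finset.mem_univ, true_and,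
        Finset.mem_insert, Finset.mem_singleton, not_and, not_or] at hni
      exact hkey i hi (hni hi).1 (hni hi).2
    rw [e1, ← Finset.sum_pair hne']
    exact Finset.sum_le_sum_of_subset Finset.inter_subset_right
  have hZ2 : Z ≤ 2 := le_trans hZle (by
    have := htraverse (i₀ + 1); have := htraverse (i₁ + 1); omega)
  obtain ⟨r, hr⟩ := heven
  have hZeven : Z = 0 ∨ Z = 2 := by omega
  constructor
  · rcases hZeven with h | h <;> omega
  · intro h4
    have hZeq : Z = 2 := by omega
    have hs₀ : s (i₀ + 1) = 1 := by
      have := htraverse (i₀ + 1); have := htraverse (i₁ + 1); omega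
    have hs₁ : s (i₁ + 1) = 1 := by
      have := htraverse (i₀ + 1); have := htraverse (i₁ + 1); omega
    -- α (i₀+1) = 0 and α (i₁+1) = 0
    have hα₀ : α (i₀ + 1) = 0 := by
      apply hzero
      · intro h
        have h1 : ((1 : ℕ) : ZMod k) = 0 := by push_cast; linear_combination h
        have := (ZMod.natCast_eq_zero_iff 1 k).mp h1
        exact hk1 (Nat.dvd_one.mp this)
      · exact fun h => hnadj.1 h.symm
    have hα₁ : α (i₁ + 1) = 0 := by
      apply hzero
      · exact fun h => hnadj.2 h.symm
      · intro h
        have h1 : ((1 : ℕ) : ZMod k) = 0 := by push_cast; linear_combination h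
        exact hk1 (Nat.dvd_one.mp ((ZMod.natCast_eq_zero_iff 1 k).mp h1))
    have h₀ := (hstar _ hα₀ (by omega)).2
    have h₁ := (hstar _ hα₁ (by omega)).2
    rcases (hα _).mp h₀ with h | h
    · -- i₀ + 1 + 1 = i₀ : k ∣ 2, contradiction
      exfalso; apply hkdvd2
      have h2 : ((2 : ℕ) : ZMod k) = 0 := by push_cast; linear_combination h
      exact (ZMod.natCast_eq_zero_iff 2 k).mp h2
    · -- i₀ + 2 = i₁
      rcases (hα _).mp h₁ with h' | h'
      · -- i₁ + 2 = i₀, combined with previous : k ∣ 4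
        have h4' : ((4 : ℕ) : ZMod k) = 0 := by
          push_cast
          linear_combination h + h'
        have hdvd : k ∣ 4 := (ZMod.natCast_eq_zero_iff 4 k).mp h4'
        have hle : k ≤ 4 := Nat.le_of_dvd (by norm_num) hdvd
        have hcase : k = 3 ∨ k = 4 := by omega
        rcases hcase with h3 | h4
        · exact absurd (h3 ▸ hdvd) (by norm_num)
        · exact h4
      · -- i₁ + 1 + 1 = i₁ : k ∣ 2
        exfalso; apply hkdvd2
        have h2 : ((2 : ℕ) : ZMod k) = 0 := by push_cast; linear_combination h'
        exact (ZMod.natCast_eq_zero_iff 2 k).mp h2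
end
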